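/- Let S be a restriction monoid and L(S) the set of order ideals of S (with respect to the natural partial order). Then L(S) is closed under subset multiplication, and with the operations λ(A) = {λ(a) : a ∈ A}, ρ(A) = {ρ(a) : a ∈ A}, and unit E = e↓, ordered by inclusion, L(S) is an Ehresmann quantal frame. Moreover, the map η: S → L(S), s ↦ s↓, is an injective monoid homomorphism preserving λ and ρ. -/
import Mathlib


structure EhresmannSemigroup (S : Type*) [Semigroup S] where
  E : Set S
  E_nonempty : E.Nonempty
  idem : ∀ a ∈ E, a * a = a
  comm : ∀ a ∈ E, ∀ b ∈ E, a * b = b * a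
  mul_mem : ∀ a ∈ E, ∀ b ∈ E, a * b ∈ E
  lam : S → S
  rho : S → S
  lam_mem : ∀ a, lam a ∈ E
  rho_mem : ∀ a, rho a ∈ E
  lam_proj : ∀ a ∈ E, lam a = a
  rho_proj : ∀ a ∈ E, rho a = a
  mul_lam : ∀ a, a * lam a = a
  rho_mul : ∀ a, rho a * a = a
  lam_lam : ∀ a b, lam (lam a * b) = lam (a * b)
  rho_rho : ∀ a b, rho (a * rho b) = rho (a * b)

/-- The natural partial order: `a ≤ b` iff `a = e * b = b * f` for some projections `e, f`. -/
def EhresmannSemigroup.nle {S : Type*} [Semigroup S] (R : EhresmannSemigroup S)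
    (a b : S) : Prop :=
  ∃ e ∈ R.E, ∃ f ∈ R.E, a = e * b ∧ a = b * f

structure RestrictionSemigroup (S : Type*) [Semigroup S] extends EhresmannSemigroup S where
  bd_left : ∀ a, ∀ f ∈ E, f * a = a * lam (f * a)
  bd_right : ∀ a, ∀ f ∈ E, a * f = rho (a * f) * a

namespace RestrictionSemigroup

variable {S : Type*} [Semigroup S]

def nle (R : RestrictionSemigroup S) : S → S → Prop :=
  R.toEhresmannSemigroup.nle

/-- Compatibility of two elements. -/
def compat (R : RestrictionSemigroup S) (a b : S) : Prop :=
  a * R.lam b = b * R.lam a ∧ R.rho b * a = R.rho a * b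

/-- `s` is the join (least upper bound) of `A` w.r.t. the natural partial order. -/
def isJoin (R : RestrictionSemigroup S) (A : Set S) (s : S) : Prop :=
  (∀ a ∈ A, R.nle a s) ∧ ∀ t, (∀ a ∈ A, R.nle a t) → R.nle s t

/-- `z` is the meet (greatest lower bound) of `A` w.r.t. the natural partial order. -/
def isMeet (R : RestrictionSemigroup S) (A : Set S) (z : S) : Prop :=
  (∀ a ∈ A, R.nle z a) ∧ ∀ w, (∀ a ∈ A, R.nle w a) → R.nle w z

end RestrictionSemigroup

open Pointwise

/-- `A` is an order ideal w.r.t. the natural partial order. -/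
def IsOrdIdeal {S : Type*} [Semigroup S] (R : RestrictionSemigroup S)
    (A : Set S) : Prop :=
  ∀ a ∈ A, ∀ b, R.nle b a → b ∈ A


namespace RestrictionSemigroup
variable {S : Type*} [Semigroup S] (R : RestrictionSemigroup S)

lemma nle_of_rho {a b : S} (h : a = R.rho a * b) : R.nle a b := by
  refine ⟨R.rho a, R.rho_mem a, R.lam a, R.lam_mem a, h, ?_⟩
  have hb := R.bd_left b (R.rho a) (R.rho_mem a)
  calc a = R.rho a * b := h
    _ = b * R.lam (R.rho a * b) := hb
    _ = b * R.lam a := by rw [← h]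

lemma nle_of_lam {a b : S} (h : a = b * R.lam a) : R.nle a b := by
  apply R.nle_of_rho
  have hb := R.bd_right b (R.lam a) (R.lam_mem a)
  calc a = b * R.lam a := h
    _ = R.rho (b * R.lam a) * b := hb
    _ = R.rho a * b := by rw [← h]

lemma nle_rho {a b : S} (h : R.nle a b) : a = R.rho a * b := by
  obtain ⟨e, he, f, hf, h1, h2⟩ := h
  have hb := R.bd_right b f hf
  calc a = b * f := h2
    _ = R.rho (b * f) * b := hb
    _ = R.rho a * b := by rw [← h2]

lemma nle_lam {a b : S} (h : R.nle a b) : a = b * R.lam a := by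
  obtain ⟨e, he, f, hf, h1, h2⟩ := h
  have hb := R.bd_left b e he
  calc a = e * b := h1
    _ = b * R.lam (e * b) := hb
    _ = b * R.lam a := by rw [← h1]

lemma nle_refl (a : S) : R.nle a a := R.nle_of_rho (R.rho_mul a).symm

lemma nle_trans {a b c : S} (h1 : R.nle a b) (h2 : R.nle b c) : R.nle a c := by
  obtain ⟨e, he, f, hf, hx1, hx2⟩ := h1
  obtain ⟨e', he', f', hf', hy1, hy2⟩ := h2
  refine ⟨e * e', R.mul_mem e he e' he', f' * f, R.mul_mem f' hf' f hf, ?_, ?_⟩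
  · rw [mul_assoc, ← hy1, ← hx1]
  · rw [← mul_assoc, ← hy2, ← hx2]

lemma nle_antisymm {a b : S} (h1 : R.nle a b) (h2 : R.nle b a) : a = b := by
  obtain ⟨e, he, f, hf, hx1, hx2⟩ := h1
  obtain ⟨e', he', f', hf', hy1, hy2⟩ := h2
  have hb : e' * b = b := by
    rw [hy1, ← mul_assoc, R.idem e' he']
  calc a = e * b := hx1
    _ = e * (e' * b) := by rw [hb]
    _ = e' * (e * b) := by rw [← mul_assoc, ← mul_assoc, R.comm e he e' he']
    _ = e' * a := by rw [← hx1]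
    _ = b := hy1.symm

lemma mul_nle_right (a : S) {f : S} (hf : f ∈ R.E) : R.nle (a * f) a :=
  ⟨R.rho (a * f), R.rho_mem _, f, hf, R.bd_right a f hf, rfl⟩

lemma mul_nle_left (a : S) {e : S} (he : e ∈ R.E) : R.nle (e * a) a :=
  ⟨e, he, R.lam (e * a), R.lam_mem _, rfl, R.bd_left a e he⟩

lemma nle_mul {a b s t : S} (h1 : R.nle a s) (h2 : R.nle b t) :
    R.nle (a * b) (s * t) := by
  have ha := R.nle_rho h1
  have hb := R.nle_lam h2
  have key : a * b = R.rho a * (s * t * R.lam b) := by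
    conv_lhs => rw [ha, hb]
    simp only [mul_assoc]
  rw [key]
  exact R.nle_trans (R.mul_nle_left _ (R.rho_mem a))
    (R.mul_nle_right _ (R.lam_mem b))

lemma lam_mono {a b : S} (h : R.nle a b) : R.nle (R.lam a) (R.lam b) := by
  have h1 : R.lam a = R.lam b * R.lam a := by
    have : R.lam (R.lam b * R.lam a) = R.lam b * R.lam a :=
      R.lam_proj _ (R.mul_mem _ (R.lam_mem b) _ (R.lam_mem a))
    calc R.lam a = R.lam (b * R.lam a) := by rw [← R.nle_lam h]
      _ = R.lam (R.lam b * R.lam a) := (R.lam_lam b (R.lam a)).symm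
      _ = R.lam b * R.lam a := this
  exact ⟨R.lam a, R.lam_mem a, R.lam a, R.lam_mem a,
    by rw [R.comm _ (R.lam_mem a) _ (R.lam_mem b)]; exact h1, h1⟩

lemma rho_mono {a b : S} (h : R.nle a b) : R.nle (R.rho a) (R.rho b) := by
  have h1 : R.rho a = R.rho a * R.rho b := by
    have : R.rho (R.rho a * R.rho b) = R.rho a * R.rho b :=
      R.rho_proj _ (R.mul_mem _ (R.rho_mem a) _ (R.rho_mem b))
    calc R.rho a = R.rho (R.rho a * b) := by rw [← R.nle_rho h]
      _ = R.rho (R.rho a * R.rho b) := (R.rho_rho (R.rho a) b).symm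
      _ = R.rho a * R.rho b := this
  exact ⟨R.rho a, R.rho_mem a, R.rho a, R.rho_mem a, h1,
    by rw [R.comm _ (R.rho_mem b) _ (R.rho_mem a)]; exact h1⟩

lemma nle_E {a b : S} (hb : b ∈ R.E) (h : R.nle a b) : a ∈ R.E := by
  rw [R.nle_rho h]; exact R.mul_mem _ (R.rho_mem a) _ hb

/-- If `b ≤ lam a` then `b = lam (a * b)` and `a * b ≤ a`. -/
lemma nle_lam_lift {a b : S} (h : R.nle b (R.lam a)) :
    b = R.lam (a * b) ∧ R.nle (a * b) a := by
  obtain ⟨e, he, f, hf, h1, h2⟩ := h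
  have hbE : b ∈ R.E := R.nle_E (R.lam_mem a) ⟨e, he, f, hf, h1, h2⟩
  have hlb : R.lam a * b = b := by
    rw [h2, ← mul_assoc, R.idem _ (R.lam_mem a)]
  constructor
  · calc b = R.lam b := (R.lam_proj b hbE).symm
      _ = R.lam (R.lam a * b) := by rw [hlb]
      _ = R.lam (a * b) := R.lam_lam a b
  · exact R.mul_nle_right a hbE

lemma nle_rho_lift {a b : S} (h : R.nle b (R.rho a)) :
    b = R.rho (b * a) ∧ R.nle (b * a) a := by
  obtain ⟨e, he, f, hf, h1, h2⟩ := h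
  have hbE : b ∈ R.E := R.nle_E (R.rho_mem a) ⟨e, he, f, hf, h1, h2⟩
  have hlb : b * R.rho a = b := by
    rw [h1, mul_assoc, R.idem _ (R.rho_mem a)]
  constructor
  · calc b = R.rho b := (R.rho_proj b hbE).symm
      _ = R.rho (b * R.rho a) := by rw [hlb]
      _ = R.rho (b * a) := R.rho_rho b a
  · exact R.mul_nle_left a hbE

end RestrictionSemigroup

/-- The set of order ideals of a restriction monoid `S` is closed under
pointwise multiplication, unions and intersections, and, with unit `E` and
supports `A ↦ λ(A)`, `A ↦ ρ(A)`, satisfies the Ehresmann quantal frame axioms;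
the map `η : s ↦ s↓` is an injective monoid homomorphism preserving `λ`, `ρ`. -/
theorem order_ideals_ehresmann_quantal_frame {S : Type*} [Monoid S]
    (R : RestrictionSemigroup S) :
    (∀ A B : Set S, IsOrdIdeal R A → IsOrdIdeal R B → IsOrdIdeal R (A * B)) ∧
    (∀ 𝒜 : Set (Set S), (∀ A ∈ 𝒜, IsOrdIdeal R A) → IsOrdIdeal R (⋃₀ 𝒜)) ∧
    (∀ A B : Set S, IsOrdIdeal R A → IsOrdIdeal R B → IsOrdIdeal R (A ∩ B)) ∧
    IsOrdIdeal R R.E ∧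
    (∀ A : Set S, IsOrdIdeal R A → A * R.E = A ∧ R.E * A = A) ∧
    (∀ A : Set S, IsOrdIdeal R A →
      IsOrdIdeal R (R.lam '' A) ∧ R.lam '' A ⊆ R.E ∧
      IsOrdIdeal R (R.rho '' A) ∧ R.rho '' A ⊆ R.E) ∧
    (∀ A : Set S, IsOrdIdeal R A → A ⊆ R.E → R.lam '' A = A ∧ R.rho '' A = A) ∧
    (∀ A : Set S, IsOrdIdeal R A →
      A * (R.lam '' A) = A ∧ (R.rho '' A) * A = A) ∧
    (∀ A B : Set S, IsOrdIdeal R A → IsOrdIdeal R B →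
      R.lam '' ((R.lam '' A) * B) = R.lam '' (A * B) ∧
      R.rho '' (A * (R.rho '' B)) = R.rho '' (A * B)) ∧
    Function.Injective (fun s : S => ({t | R.nle t s} : Set S)) ∧
    (∀ s : S, IsOrdIdeal R ({t | R.nle t s} : Set S)) ∧
    (∀ s t : S, ({x | R.nle x (s * t)} : Set S) = {x | R.nle x s} * {x | R.nle x t}) ∧
    (({x | R.nle x 1} : Set S) = R.E) ∧
    (∀ s : S, R.lam '' ({t | R.nle t s} : Set S) = {x | R.nle x (R.lam s)} ∧
      R.rho '' ({t | R.nle t s} : Set S) = {x | R.nle x (R.rho s)}) := by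
  refine ⟨?_, ?_, ?_, ?_, ?_, ?_, ?_, ?_, ?_, ?_, ?_, ?_, ?_, ?_⟩
  · -- products of ideals
    rintro A B hA hB c hc b hb
    obtain ⟨x, hx, y, hy, rfl⟩ := hc
    refine ⟨R.rho b * x, hA x hx _ (R.mul_nle_left x (R.rho_mem b)), y, hy, ?_⟩
    show R.rho b * x * y = b
    rw [mul_assoc]; exact (R.nle_rho hb).symm
  · -- unions
    rintro 𝒜 h𝒜 a ⟨A, hA, haA⟩ b hb
    exact ⟨A, hA, h𝒜 A hA a haA b hb⟩
  · -- intersections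
    rintro A B hA hB a ⟨ha1, ha2⟩ b hb
    exact ⟨hA a ha1 b hb, hB a ha2 b hb⟩
  · -- E is an ideal
    intro a ha b hb
    exact R.nle_E ha hb
  · -- E is a unit
    intro A hA
    constructor
    · ext x
      constructor
      · rintro ⟨a, ha, e, he, rfl⟩
        exact hA a ha _ (R.mul_nle_right a he)
      · intro hx
        exact ⟨x, hx, R.lam x, R.lam_mem x, R.mul_lam x⟩
    · ext x
      constructor
      · rintro ⟨e, he, a, ha, rfl⟩
        exact hA a ha _ (R.mul_nle_left a he)
      · intro hx
        exact ⟨R.rho x, R.rho_mem x, x, hx, R.rho_mul x⟩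
  · -- supports are ideals contained in E
    intro A hA
    refine ⟨?_, ?_, ?_, ?_⟩
    · rintro x ⟨a, ha, rfl⟩ b hb
      obtain ⟨h1, h2⟩ := R.nle_lam_lift hb
      exact ⟨a * b, hA a ha _ h2, h1.symm⟩
    · rintro _ ⟨a, ha, rfl⟩
      exact R.lam_mem a
    · rintro x ⟨a, ha, rfl⟩ b hb
      obtain ⟨h1, h2⟩ := R.nle_rho_lift hb
      exact ⟨b * a, hA a ha _ h2, h1.symm⟩
    · rintro _ ⟨a, ha, rfl⟩
      exact R.rho_mem a
  · -- supports restrict to identity on subideals of E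
    intro A hA hsub
    constructor
    · ext x
      constructor
      · rintro ⟨a, ha, rfl⟩
        rwa [R.lam_proj a (hsub ha)]
      · intro hx
        exact ⟨x, hx, R.lam_proj x (hsub hx)⟩
    · ext x
      constructor
      · rintro ⟨a, ha, rfl⟩
        rwa [R.rho_proj a (hsub ha)]
      · intro hx
        exact ⟨x, hx, R.rho_proj x (hsub hx)⟩
  · -- A * lam(A) = A, rho(A) * A = A
    intro A hA
    constructor
    · ext x
      constructor
      · rintro ⟨a, ha, _, ⟨a', _, rfl⟩, rfl⟩
        exact hA a ha _ (R.mul_nle_right a (R.lam_mem a'))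
      · intro hx
        exact ⟨x, hx, R.lam x, ⟨x, hx, rfl⟩, R.mul_lam x⟩
    · ext x
      constructor
      · rintro ⟨_, ⟨a', _, rfl⟩, a, ha, rfl⟩
        exact hA a ha _ (R.mul_nle_left a (R.rho_mem a'))
      · intro hx
        exact ⟨R.rho x, ⟨x, hx, rfl⟩, x, hx, R.rho_mul x⟩
  · -- left/right congruence conditions
    intro A B hA hB
    constructor
    · ext x
      constructor
      · rintro ⟨_, ⟨_, ⟨a, ha, rfl⟩, b, hb, rfl⟩, rfl⟩
        exact ⟨a * b, ⟨a, ha, b, hb, rfl⟩, (R.lam_lam a b).symm⟩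
      · rintro ⟨_, ⟨a, ha, b, hb, rfl⟩, rfl⟩
        exact ⟨R.lam a * b, ⟨R.lam a, ⟨a, ha, rfl⟩, b, hb, rfl⟩, R.lam_lam a b⟩
    · ext x
      constructor
      · rintro ⟨_, ⟨a, ha, _, ⟨b, hb, rfl⟩, rfl⟩, rfl⟩
        exact ⟨a * b, ⟨a, ha, b, hb, rfl⟩, by exact (R.rho_rho a b).symm⟩
      · rintro ⟨_, ⟨a, ha, b, hb, rfl⟩, rfl⟩
        exact ⟨a * R.rho b, ⟨a, ha, R.rho b, ⟨b, hb, rfl⟩, rfl⟩, by exact R.rho_rho a b⟩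
  · -- injectivity of η
    intro s t h
    simp only [Set.ext_iff, Set.mem_setOf_eq] at h
    exact R.nle_antisymm ((h s).mp (R.nle_refl s)) ((h t).mpr (R.nle_refl t))
  · -- s↓ is an ideal
    intro s a ha b hb
    exact R.nle_trans hb ha
  · -- η is multiplicative
    intro s t
    ext x
    constructor
    · intro hx
      refine ⟨R.rho x * s, R.mul_nle_left s (R.rho_mem x), t, R.nle_refl t, ?_⟩
      show R.rho x * s * t = x
      rw [mul_assoc]; exact (R.nle_rho hx).symm
    · rintro ⟨a, ha, b, hb, rfl⟩
      exact R.nle_mul ha hb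
  · -- η(1) = E
    ext x
    constructor
    · rintro ⟨e, he, f, hf, h1, h2⟩
      rw [h1, mul_one]; exact he
    · intro hx
      exact ⟨x, hx, x, hx, (mul_one x).symm, (one_mul x).symm⟩
  · -- η preserves lam and rho
    intro s
    constructor
    · ext x
      constructor
      · rintro ⟨t, ht, rfl⟩
        exact R.lam_mono ht
      · intro hx
        obtain ⟨h1, h2⟩ := R.nle_lam_lift hx
        exact ⟨s * x, h2, h1.symm⟩
    · ext x
      constructor
      · rintro ⟨t, ht, rfl⟩
        exact R.rho_mono ht
      · intro hx
        obtain ⟨h1, h2⟩ := R.nle_rho_lift hx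
        exact ⟨x * s, h2, h1.symm⟩
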